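/- There exists a countable, connected graph with infinite motion (every non-trivial automorphism moves infinitely many vertices) that has no distinguishing colouring with any finite number of colours. -/

import Mathlib

/-!
A vertex of the graph on `α ⊕ α` (with `inl q ~ inr r ↔ q < r`) is determined by its neighbours
outside any finite set, so an automorphism moving only finitely many vertices is the identity.

An order automorphism `F` of `ℚ`, acting diagonally on `ℚ ⊕ ℚ`, preserves a colouring `c` as soon
as it preserves the colouring `q ↦ (c (inl q), c (inr q))` of `ℚ`. Given a finite colouring of `ℚ`,
take an interval meeting the fewest colours: every colour occurring in it is dense in it, so a
back-and-forth argument gives a colour-preserving automorphism of the interval sending a point to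
another of the same colour; extend it by the identity.
-/

open Set Order

section ColouredBackAndForth

variable {α C : Type*} [LinearOrder α]

def IsDenselyColoured (c : α → C) : Prop :=
  ∀ x u v : α, u < v → ∃ z, u < z ∧ z < v ∧ c z = c x

variable {c : α → C}

theorem IsDenselyColoured.exists_between_finsets [NoMinOrder α] [NoMaxOrder α]
    (hc : IsDenselyColoured c) (x : α) (lo hi : Finset α) (lo_lt_hi : ∀ y ∈ lo, ∀ z ∈ hi, y < z) :
    ∃ m, c m = c x ∧ (∀ y ∈ lo, y < m) ∧ ∀ z ∈ hi, m < z := by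
  have : DenselyOrdered α := ⟨fun u v huv ↦ (hc x u v huv).imp fun _ h ↦ ⟨h.1, h.2.1⟩⟩
  have : Nonempty α := ⟨x⟩
  obtain ⟨m₀, hlo₀, hhi₀⟩ := Order.exists_between_finsets lo hi lo_lt_hi
  obtain ⟨m₁, hlo₁, hm₁⟩ := Order.exists_between_finsets lo {m₀} (by simpa using hlo₀)
  obtain ⟨m, hm₁m, hmm₀, hcm⟩ := hc x m₁ m₀ (hm₁ m₀ (Finset.mem_singleton_self _))
  exact ⟨m, hcm, fun y hy ↦ (hlo₁ y hy).trans hm₁m, fun z hz ↦ hmm₀.trans (hhi₀ z hz)⟩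

variable (c) in
abbrev ColouredPartialIso : Type _ :=
  {f : PartialIso α α // ∀ p ∈ f.val, c p.1 = c p.2}

namespace ColouredPartialIso

theorem exists_across [NoMinOrder α] [NoMaxOrder α] (hc : IsDenselyColoured c)
    (f : ColouredPartialIso c) (a : α) :
    ∃ b, c a = c b ∧ ∀ p ∈ f.val.val, cmp p.1 a = cmp p.2 b := by
  by_cases h : ∃ b, (a, b) ∈ f.val.val
  · obtain ⟨b, hb⟩ := h
    exact ⟨b, f.prop _ hb, fun p hp ↦ f.val.prop _ hp _ hb⟩
  have lo_lt_hi : ∀ x ∈ {p ∈ f.val.val | p.1 < a}.image Prod.snd,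
      ∀ y ∈ {p ∈ f.val.val | a < p.1}.image Prod.snd, x < y := by
    simp only [Finset.mem_image, Finset.mem_filter]
    rintro _ ⟨p, ⟨hp, hpa⟩, rfl⟩ _ ⟨q, ⟨hq, haq⟩, rfl⟩
    exact (lt_iff_lt_of_cmp_eq_cmp (f.val.prop _ hp _ hq)).mp (hpa.trans haq)
  obtain ⟨b, hcb, hlo, hhi⟩ := hc.exists_between_finsets a _ _ lo_lt_hi
  refine ⟨b, hcb.symm, fun p hp ↦ ?_⟩
  have hpa : p.1 ≠ a := fun he ↦ h ⟨p.2, he ▸ hp⟩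
  rcases hpa.lt_or_gt with hpa | hap
  · have hpb := hlo _ (Finset.mem_image_of_mem _ (Finset.mem_filter.mpr ⟨hp, hpa⟩))
    rw [(cmp_eq_lt_iff _ _).mpr hpa, (cmp_eq_lt_iff _ _).mpr hpb]
  · have hbp := hhi _ (Finset.mem_image_of_mem _ (Finset.mem_filter.mpr ⟨hp, hap⟩))
    rw [(cmp_eq_gt_iff _ _).mpr hap, (cmp_eq_gt_iff _ _).mpr hbp]

protected def comm (f : ColouredPartialIso c) : ColouredPartialIso c :=
  ⟨f.val.comm, fun p hp ↦ by
    obtain ⟨q, hq, rfl⟩ := Finset.mem_image.mp hp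
    exact (f.prop q hq).symm⟩

theorem mem_comm {f : ColouredPartialIso c} {a b : α} :
    (a, b) ∈ f.comm.val.val ↔ (b, a) ∈ f.val.val := by
  simp [ColouredPartialIso.comm, PartialIso.comm, Subtype.map]

variable (c) in
def definedAtLeft [NoMinOrder α] [NoMaxOrder α] (hc : IsDenselyColoured c) (a : α) :
    Cofinal (ColouredPartialIso c) where
  carrier := {f | ∃ b, (a, b) ∈ f.val.val}
  isCofinal f := by
    obtain ⟨b, hcab, hab⟩ := exists_across hc f a
    refine ⟨⟨⟨insert (a, b) f.val.val, fun p hp q hq ↦ ?_⟩, fun p hp ↦ ?_⟩,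
      ⟨b, Finset.mem_insert_self _ _⟩, Finset.subset_insert _ _⟩
    · rw [Finset.mem_insert] at hp hq
      rcases hp with rfl | hp <;> rcases hq with rfl | hq
      · simp only [cmp_self_eq_eq]
      · rw [cmp_eq_cmp_symm]
        exact hab _ hq
      · exact hab _ hp
      · exact f.val.prop _ hp _ hq
    · rcases Finset.mem_insert.mp hp with rfl | hp
      exacts [hcab, f.prop _ hp]

variable (c) in
def definedAtRight [NoMinOrder α] [NoMaxOrder α] (hc : IsDenselyColoured c) (b : α) :
    Cofinal (ColouredPartialIso c) where
  carrier := {f | ∃ a, (a, b) ∈ f.val.val}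
  isCofinal f := by
    obtain ⟨f', ⟨a, ha⟩, hle⟩ := (definedAtLeft c hc b).isCofinal f.comm
    refine ⟨f'.comm, ⟨a, mem_comm.mpr ha⟩, fun p hp ↦ mem_comm.mpr (hle (mem_comm.mpr hp))⟩

end ColouredPartialIso

open ColouredPartialIso in
theorem IsDenselyColoured.exists_orderIso_apply_eq [Countable α] [NoMinOrder α] [NoMaxOrder α]
    (hc : IsDenselyColoured c) {x y : α} (hxy : c x = c y) :
    ∃ F : α ≃o α, F x = y ∧ ∀ z, c (F z) = c z := by
  cases nonempty_encodable α
  let base : ColouredPartialIso c := ⟨⟨{(x, y)}, by simp⟩, by simpa⟩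
  let cofinals : α ⊕ α → Cofinal (ColouredPartialIso c) :=
    Sum.elim (definedAtLeft c hc) (definedAtRight c hc)
  let I := idealOfCofinals base cofinals
  have compat {f g : ColouredPartialIso c} {p q : α × α} (hf : f ∈ I) (hg : g ∈ I)
      (hp : p ∈ f.val.val) (hq : q ∈ g.val.val) : cmp p.1 q.1 = cmp p.2 q.2 := by
    obtain ⟨h, -, hfh, hgh⟩ := I.directed _ hf _ hg
    exact h.val.prop _ (hfh hp) _ (hgh hq)
  have forth (a : α) : ∃ b, ∃ f ∈ I, (a, b) ∈ f.val.val := by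
    obtain ⟨f, ⟨b, hb⟩, hf⟩ := cofinal_meets_idealOfCofinals base cofinals (Sum.inl a)
    exact ⟨b, f, hf, hb⟩
  have back (b : α) : ∃ a, ∃ g ∈ I, (a, b) ∈ g.val.val := by
    obtain ⟨g, ⟨a, ha⟩, hg⟩ := cofinal_meets_idealOfCofinals base cofinals (Sum.inr b)
    exact ⟨a, g, hg, ha⟩
  choose F f hfI hfF using forth
  choose G g hgI hgG using back
  refine ⟨OrderIso.ofCmpEqCmp F G fun a b ↦ compat (hfI a) (hgI b) (hfF a) (hgG b), ?_,
    fun z ↦ (f z).prop _ (hfF z) |>.symm⟩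
  have hbase : base ∈ I := ⟨0, le_rfl⟩
  have := compat (hfI x) hbase (hfF x) (Finset.mem_singleton_self _)
  rwa [cmp_self_eq_eq, eq_comm, cmp_eq_eq_iff] at this

end ColouredBackAndForth

section ExtendByIdentity

open Classical

variable {α C : Type*} [LinearOrder α] {s : Set α}

theorem Set.OrdConnected.lt_of_mem_of_notMem (hs : s.OrdConnected) {x y z : α} (hx : x ∈ s)
    (hz : z ∈ s) (hy : y ∉ s) (hxy : x < y) : z < y :=
  lt_of_not_ge fun hyz ↦ hy (hs.out hx hz ⟨hxy.le, hyz⟩)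

theorem Set.OrdConnected.lt_of_notMem_of_mem (hs : s.OrdConnected) {x y z : α} (hx : x ∈ s)
    (hz : z ∈ s) (hy : y ∉ s) (hyx : y < x) : y < z :=
  lt_of_not_ge fun hzy ↦ hy (hs.out hz hx ⟨hzy, hyx.le⟩)

theorem Set.OrdConnected.strictMono_ofSubtype (hs : s.OrdConnected) (F : s ≃o s) :
    StrictMono (Equiv.Perm.ofSubtype F.toEquiv) := by
  intro x y hxy
  by_cases hx : x ∈ s <;> by_cases hy : y ∈ s <;>
    simp only [Equiv.Perm.ofSubtype_apply_of_mem, Equiv.Perm.ofSubtype_apply_of_not_mem, hx, hy,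
      not_false_eq_true]
  · exact F.strictMono (show (⟨x, hx⟩ : s) < ⟨y, hy⟩ from hxy)
  · exact hs.lt_of_mem_of_notMem hx (F ⟨x, hx⟩).2 hy hxy
  · exact hs.lt_of_notMem_of_mem hy (F ⟨y, hy⟩).2 hx hxy
  · exact hxy

noncomputable def Set.OrdConnected.extendOrderIso (hs : s.OrdConnected) (F : s ≃o s) :
    α ≃o α where
  toEquiv := Equiv.Perm.ofSubtype F.toEquiv
  map_rel_iff' := (hs.strictMono_ofSubtype F).le_iff_le

theorem Set.OrdConnected.extendOrderIso_apply_of_mem (hs : s.OrdConnected) (F : s ≃o s) {x : α}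
    (hx : x ∈ s) : hs.extendOrderIso F x = F ⟨x, hx⟩ :=
  Equiv.Perm.ofSubtype_apply_of_mem _ hx

theorem Set.OrdConnected.extendOrderIso_apply_of_notMem (hs : s.OrdConnected) (F : s ≃o s)
    {x : α} (hx : x ∉ s) : hs.extendOrderIso F x = x :=
  Equiv.Perm.ofSubtype_apply_of_not_mem _ hx

theorem Set.OrdConnected.comp_extendOrderIso (hs : s.OrdConnected) {F : s ≃o s} {c : α → C}
    (hF : ∀ x : s, c (F x) = c x) (x : α) : c (hs.extendOrderIso F x) = c x := by
  by_cases hx : x ∈ s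
  · rw [hs.extendOrderIso_apply_of_mem F hx, hF]
  · rw [hs.extendOrderIso_apply_of_notMem F hx]

end ExtendByIdentity

section FiniteColourings

variable {α C : Type*} [LinearOrder α]

theorem exists_Ioo_isDenselyColoured [DenselyOrdered α] [Finite C] (c : α → C) {a b : α}
    (hab : a < b) : ∃ a' b', a' < b' ∧ IsDenselyColoured fun x : Ioo a' b' ↦ c x.1 := by
  obtain ⟨⟨a', b'⟩, hab', hmin⟩ := (measure fun p : α × α ↦ (c '' Ioo p.1 p.2).ncard).wf.has_min
    {p | p.1 < p.2} ⟨(a, b), hab⟩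
  refine ⟨a', b', hab', fun x u v huv ↦ ?_⟩
  have hsub : c '' Ioo ↑u ↑v ⊆ c '' Ioo a' b' := image_mono (Ioo_subset_Ioo u.2.1.le v.2.2.le)
  have heq : c '' Ioo ↑u ↑v = c '' Ioo a' b' :=
    eq_of_subset_of_ncard_le hsub (not_lt.mp (hmin (u, v) huv))
  obtain ⟨z, hz, hcz⟩ : c ↑x ∈ c '' Ioo ↑u ↑v := heq ▸ mem_image_of_mem c x.2
  exact ⟨⟨z, u.2.1.trans hz.1, hz.2.trans v.2.2⟩, hz.1, hz.2, hcz⟩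

theorem exists_orderIso_ne_refl_forall_apply_eq [Countable α] [DenselyOrdered α] [Nontrivial α]
    [Finite C] (c : α → C) : ∃ F : α ≃o α, F ≠ OrderIso.refl α ∧ ∀ x, c (F x) = c x := by
  obtain ⟨a, b, hab⟩ := exists_pair_lt α
  obtain ⟨a', b', hab', hc⟩ := exists_Ioo_isDenselyColoured c hab
  obtain ⟨x, hx⟩ := exists_between hab'
  obtain ⟨v, hxv⟩ := exists_gt (⟨x, hx⟩ : Ioo a' b')
  obtain ⟨y, hxy, -, hcy⟩ := hc ⟨x, hx⟩ _ v hxv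
  obtain ⟨F, hFx, hcF⟩ := hc.exists_orderIso_apply_eq hcy.symm
  refine ⟨ordConnected_Ioo.extendOrderIso F, fun h ↦ hxy.ne ?_,
    ordConnected_Ioo.comp_extendOrderIso hcF⟩
  have := ordConnected_Ioo.extendOrderIso_apply_of_mem F hx
  rw [h, hFx] at this
  exact Subtype.ext this

end FiniteColourings

section LtGraph

variable {α β : Type*} [LinearOrder α] [LinearOrder β]

variable (α) in
def ltGraph : SimpleGraph (α ⊕ α) where
  Adj
    | .inl q, .inr r => q < r
    | .inr r, .inl q => q < r
    | _, _ => False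
  symm := ⟨by rintro (q | q) (r | r) h <;> exact h⟩
  loopless := ⟨by rintro (q | q) h <;> exact h⟩

namespace ltGraph

@[simp] theorem adj_inl_inr {q r : α} : (ltGraph α).Adj (.inl q) (.inr r) ↔ q < r := Iff.rfl
@[simp] theorem adj_inr_inl {q r : α} : (ltGraph α).Adj (.inr r) (.inl q) ↔ q < r := Iff.rfl
@[simp] theorem not_adj_inl_inl {q r : α} : ¬ (ltGraph α).Adj (.inl q) (.inl r) := id
@[simp] theorem not_adj_inr_inr {q r : α} : ¬ (ltGraph α).Adj (.inr q) (.inr r) := id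

theorem connected [Nonempty α] [NoMinOrder α] [NoMaxOrder α] : (ltGraph α).Connected := by
  obtain ⟨o⟩ := ‹Nonempty α›
  have reach_inl (q : α) : (ltGraph α).Reachable (.inl q) (.inl o) := by
    obtain ⟨r, hr⟩ := exists_gt (max q o)
    have hq : (ltGraph α).Adj (.inl q) (.inr r) := (le_max_left q o).trans_lt hr
    have ho : (ltGraph α).Adj (.inr r) (.inl o) := (le_max_right q o).trans_lt hr
    exact hq.reachable.trans ho.reachable
  have reach (v : α ⊕ α) : (ltGraph α).Reachable v (.inl o) := by
    rcases v with q | r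
    · exact reach_inl q
    · obtain ⟨q, hq⟩ := exists_lt r
      exact (show (ltGraph α).Adj (.inr r) (.inl q) from hq).reachable.trans (reach_inl q)
  exact ⟨fun v w ↦ (reach v).trans (reach w).symm⟩

variable [DenselyOrdered α] {L R : Set α} {q r : α} {w : α ⊕ α}

theorem eq_inl_of_adj_iff [NoMaxOrder α] (hR : R.Finite)
    (h : ∀ r ∉ R, (ltGraph α).Adj (.inl q) (.inr r) ↔ (ltGraph α).Adj w (.inr r)) :
    w = .inl q := by
  rcases w with q' | r'
  · rcases lt_trichotomy q' q with hlt | rfl | hlt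
    · obtain ⟨r, ⟨hq'r, hrq⟩, hr⟩ := ((Ioo_infinite hlt).sdiff hR).nonempty
      exact absurd ((h r hr).mpr hq'r) (not_lt.mpr hrq.le)
    · rfl
    · obtain ⟨r, ⟨hqr, hrq'⟩, hr⟩ := ((Ioo_infinite hlt).sdiff hR).nonempty
      exact absurd ((h r hr).mp hqr) (not_lt.mpr hrq'.le)
  · obtain ⟨r, hqr, hr⟩ := ((Ioi_infinite q).sdiff hR).nonempty
    exact absurd ((h r hr).mp hqr) not_adj_inr_inr

theorem eq_inr_of_adj_iff [NoMinOrder α] (hL : L.Finite)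
    (h : ∀ q ∉ L, (ltGraph α).Adj (.inr r) (.inl q) ↔ (ltGraph α).Adj w (.inl q)) :
    w = .inr r := by
  rcases w with q' | r'
  · obtain ⟨q, hqr, hq⟩ := ((Iio_infinite r).sdiff hL).nonempty
    exact absurd ((h q hq).mp hqr) not_adj_inl_inl
  · rcases lt_trichotomy r' r with hlt | rfl | hlt
    · obtain ⟨q, ⟨hr'q, hqr⟩, hq⟩ := ((Ioo_infinite hlt).sdiff hL).nonempty
      exact absurd ((h q hq).mp hqr) (not_lt.mpr hr'q.le)
    · rfl
    · obtain ⟨q, ⟨hrq, hqr'⟩, hq⟩ := ((Ioo_infinite hlt).sdiff hL).nonempty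
      exact absurd ((h q hq).mpr hqr') (not_lt.mpr hrq.le)

theorem eq_of_adj_iff_of_finite [NoMinOrder α] [NoMaxOrder α] {S : Set (α ⊕ α)} (hS : S.Finite)
    {v w : α ⊕ α} (h : ∀ u ∉ S, (ltGraph α).Adj v u ↔ (ltGraph α).Adj w u) : v = w := by
  rcases v with q | r
  · exact (eq_inl_of_adj_iff (hS.preimage Sum.inr_injective.injOn) fun r hr ↦ h _ hr).symm
  · exact (eq_inr_of_adj_iff (hS.preimage Sum.inl_injective.injOn) fun q hq ↦ h _ hq).symm

end ltGraph

def ltGraphCongr (f : α ≃o β) : ltGraph α ≃g ltGraph β where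
  toEquiv := Equiv.sumCongr f.toEquiv f.toEquiv
  map_rel_iff' := by rintro (q | q) (r | r) <;> simp

@[simp] theorem ltGraphCongr_inl (f : α ≃o β) (q : α) : ltGraphCongr f (.inl q) = .inl (f q) := rfl

end LtGraph

theorem SimpleGraph.Iso.adj_apply_iff_of_apply_eq {V : Type*} {G : SimpleGraph V} (φ : G ≃g G)
    {v w : V} (hw : φ w = w) : G.Adj (φ v) w ↔ G.Adj v w := by
  conv_lhs => rw [← hw]
  exact φ.map_adj_iff

theorem SimpleGraph.Iso.infinite_support {V : Type*} {G : SimpleGraph V}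
    (hG : ∀ S : Set V, S.Finite → ∀ v w, (∀ u ∉ S, G.Adj v u ↔ G.Adj w u) → v = w)
    {φ : G ≃g G} (hφ : φ ≠ .refl) : {v | φ v ≠ v}.Infinite := by
  refine fun hfin ↦ hφ (RelIso.ext fun v ↦ hG _ hfin _ _ fun u hu ↦ ?_)
  exact φ.adj_apply_iff_of_apply_eq (not_not.mp hu)

theorem exists_countable_connected_infinite_motion_no_finite_distinguishing :
    ∃ (V : Type) (G : SimpleGraph V), Countable V ∧ G.Connected ∧
      (∀ φ : G ≃g G, φ ≠ (SimpleGraph.Iso.refl : G ≃g G) → {v : V | φ v ≠ v}.Infinite) ∧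
      (∀ (C : Type), Finite C → ∀ c : V → C,
        ∃ φ : G ≃g G, φ ≠ (SimpleGraph.Iso.refl : G ≃g G) ∧ ∀ v : V, c (φ v) = c v) := by
  refine ⟨ℚ ⊕ ℚ, ltGraph ℚ, inferInstance, ltGraph.connected,
    fun φ hφ ↦ SimpleGraph.Iso.infinite_support
      (fun _ hS _ _ ↦ ltGraph.eq_of_adj_iff_of_finite hS) hφ, fun C _ c ↦ ?_⟩
  obtain ⟨F, hF, hcF⟩ := exists_orderIso_ne_refl_forall_apply_eq fun q ↦ (c (.inl q), c (.inr q))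
  refine ⟨ltGraphCongr F, fun h ↦ hF (OrderIso.ext (funext fun q ↦ ?_)), ?_⟩
  · simpa using DFunLike.congr_fun h (.inl q)
  · rintro (q | q)
    exacts [congrArg Prod.fst (hcF q), congrArg Prod.snd (hcF q)]
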